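/- arXiv:0706.2725 — 2 statements merged into one kernel-verified Lean document; each statement's English description precedes it below -/
import Mathlib

section
/- Let V be a finite nonempty type and let A : V → V → Prop be an irreflexive relation, with D = (V, A) and Z(D) its Z-mapping graph. A subgraph M of Z(D) is a perfect matching if and only if there exists a permutation σ of V such that A v (σ v) holds for every v ∈ V and the edge set of M is exactly { {Sum.inl v, Sum.inr (σ v)} : v ∈ V }. (Such a σ is automatically fixed-point-free since A is irreflexive.) -/
/-!
Every edge of `Z(D)` joins a left copy `inl u` to a right copy `inr v`, so a perfect matching
is a relation between the two copies of `V` in which every vertex has exactly one partner, that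
is, the graph of a bijection `σ`. Its edges are edges of `Z(D)`, which gives `A v (σ v)`.
-/

/-- The Z-mapping graph of a loopless digraph `D = (V, A)`: the simple graph on `V ⊕ V`
whose edges are exactly the unordered pairs `{Sum.inl u, Sum.inr v}` for arcs `A u v`. -/
def zMappingGraph {V : Type*} (A : V → V → Prop) : SimpleGraph (V ⊕ V) where
  Adj x y := (∃ u v, A u v ∧ x = Sum.inl u ∧ y = Sum.inr v) ∨
             (∃ u v, A u v ∧ x = Sum.inr v ∧ y = Sum.inl u)
  symm := by
    constructor
    rintro x y (⟨u, v, h, rfl, rfl⟩ | ⟨u, v, h, rfl, rfl⟩)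
    · exact Or.inr ⟨u, v, h, rfl, rfl⟩
    · exact Or.inl ⟨u, v, h, rfl, rfl⟩
  loopless := by
    constructor
    rintro x (⟨u, v, h, rfl, h2⟩ | ⟨u, v, h, rfl, h2⟩) <;> simp at h2

theorem exists_equiv_iff_forall_existsUnique {α β : Type*} (R : α → β → Prop) :
    (∃ e : α ≃ β, ∀ a b, R a b ↔ e a = b) ↔ (∀ a, ∃! b, R a b) ∧ ∀ b, ∃! a, R a b := by
  constructor
  · rintro ⟨e, he⟩
    refine ⟨fun a => ⟨e a, (he a _).2 rfl, fun b hb => ((he a b).1 hb).symm⟩,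
      fun b => ⟨e.symm b, (he _ b).2 (e.apply_symm_apply b), fun a ha => ?_⟩⟩
    rw [← (he a b).1 ha, e.symm_apply_apply]
  · rintro ⟨hf, hg⟩
    choose f hfR hfu using hf
    choose g hgR hgu using hg
    exact ⟨⟨f, g, fun a => (hgu _ _ (hfR a)).symm, fun b => (hfu _ _ (hgR b)).symm⟩,
      fun a b => ⟨fun h => (hfu a b h).symm, fun h => h ▸ hfR a⟩⟩

namespace Sum

variable {α β : Type*} {p : α ⊕ β → Prop}

theorem existsUnique_iff_of_forall_not_inl (h : ∀ a, ¬ p (inl a)) :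
    (∃! x, p x) ↔ ∃! b, p (inr b) := by
  constructor
  · rintro ⟨a | b, hx, hu⟩
    · exact absurd hx (h a)
    · exact ⟨b, hx, fun b' hb' => inr_injective (hu _ hb')⟩
  · rintro ⟨b, hb, hu⟩
    refine ⟨inr b, hb, ?_⟩
    rintro (a | b') h'
    · exact absurd h' (h a)
    · rw [hu b' h']

theorem existsUnique_iff_of_forall_not_inr (h : ∀ b, ¬ p (inr b)) :
    (∃! x, p x) ↔ ∃! a, p (inl a) := by
  constructor
  · rintro ⟨a | b, hx, hu⟩
    · exact ⟨a, hx, fun a' ha' => inl_injective (hu _ ha')⟩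
    · exact absurd hx (h b)
  · rintro ⟨a, ha, hu⟩
    refine ⟨inl a, ha, ?_⟩
    rintro (a' | b) h'
    · rw [hu a' h']
    · exact absurd h' (h b)

end Sum

namespace SimpleGraph

open Sum

variable {α β : Type*} {G : SimpleGraph (α ⊕ β)}

namespace IsBipartiteWith

variable (hG : G.IsBipartiteWith (Set.range inl) (Set.range inr))
include hG

theorem not_adj_inl_inl (a a' : α) : ¬ G.Adj (inl a) (inl a') := fun h => by
  simpa using hG.mem_of_mem_adj (Set.mem_range_self a) h

theorem not_adj_inr_inr (b b' : β) : ¬ G.Adj (inr b) (inr b') := fun h => by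
  simpa using hG.mem_of_mem_adj' (Set.mem_range_self b') h

end IsBipartiteWith

namespace Subgraph

variable (hG : G.IsBipartiteWith (Set.range inl) (Set.range inr)) (M : G.Subgraph)
include hG

theorem isPerfectMatching_iff_of_isBipartiteWith :
    M.IsPerfectMatching ↔
      (∀ a, ∃! b, M.Adj (inl a) (inr b)) ∧ ∀ b, ∃! a, M.Adj (inl a) (inr b) := by
  rw [isPerfectMatching_iff, Sum.forall]
  refine and_congr (forall_congr' fun a => ?_) (forall_congr' fun b => ?_)
  · exact existsUnique_iff_of_forall_not_inl fun a' h => hG.not_adj_inl_inl a a' (M.adj_sub h)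
  · simp only [M.adj_comm (inr b)]
    exact existsUnique_iff_of_forall_not_inr fun b' h => hG.not_adj_inr_inr b' b (M.adj_sub h)

theorem edgeSet_eq_iff_of_isBipartiteWith (e : α ≃ β) :
    M.edgeSet = {x | ∃ a, x = s(inl a, inr (e a))} ↔
      ∀ a b, M.Adj (inl a) (inr b) ↔ e a = b := by
  constructor
  · intro h a b
    rw [← M.mem_edgeSet, h]
    simp [eq_comm]
  · intro h
    ext x
    induction x using Sym2.ind with
    | _ x y =>
      rw [M.mem_edgeSet]
      rcases x with a | b <;> rcases y with a' | b'
      · simpa using fun h' => hG.not_adj_inl_inl a a' (M.adj_sub h')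
      · simp [h, eq_comm]
      · simp [M.adj_comm (inr b), h, eq_comm]
      · simpa using fun h' => hG.not_adj_inr_inr b b' (M.adj_sub h')

end Subgraph

end SimpleGraph

section zMappingGraph

open Sum

variable {V : Type*} {A : V → V → Prop}

theorem zMappingGraph_adj_inl_inr {u v : V} : (zMappingGraph A).Adj (inl u) (inr v) ↔ A u v := by
  simp [zMappingGraph]

theorem zMappingGraph_isBipartiteWith :
    (zMappingGraph A).IsBipartiteWith (Set.range inl) (Set.range inr) where
  disjoint := Set.isCompl_range_inl_range_inr.disjoint
  mem_of_adj := by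
    rintro _ _ (⟨u, v, -, rfl, rfl⟩ | ⟨u, v, -, rfl, rfl⟩) <;> simp

end zMappingGraph

open SimpleGraph.Subgraph in
theorem isPerfectMatching_iff_exists_perm_general {V : Type*}
    (A : V → V → Prop) (M : (zMappingGraph A).Subgraph) :
    M.IsPerfectMatching ↔
      ∃ σ : Equiv.Perm V, (∀ v, A v (σ v)) ∧
        M.edgeSet = {e : Sym2 (V ⊕ V) | ∃ v : V, e = s(Sum.inl v, Sum.inr (σ v))} := by
  rw [isPerfectMatching_iff_of_isBipartiteWith zMappingGraph_isBipartiteWith,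
    ← exists_equiv_iff_forall_existsUnique]
  refine exists_congr fun σ => ?_
  rw [edgeSet_eq_iff_of_isBipartiteWith zMappingGraph_isBipartiteWith]
  exact (and_iff_right_of_imp fun h v =>
    zMappingGraph_adj_inl_inr.1 (M.adj_sub ((h v (σ v)).2 rfl))).symm

/-- A subgraph `M` of the Z-mapping graph of a loopless digraph `D = (V, A)` is a perfect
matching if and only if there is a permutation `σ` of `V` with `A v (σ v)` for all `v`
whose associated edges `{Sum.inl v, Sum.inr (σ v)}` are exactly the edges of `M`. -/
theorem isPerfectMatching_iff_exists_perm {V : Type*} [Fintype V] [Nonempty V]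
    (A : V → V → Prop) (hA : Irreflexive A) (M : (zMappingGraph A).Subgraph) :
    M.IsPerfectMatching ↔
      ∃ σ : Equiv.Perm V, (∀ v, A v (σ v)) ∧
        M.edgeSet = {e : Sym2 (V ⊕ V) | ∃ v : V, e = s(Sum.inl v, Sum.inr (σ v))} :=
  isPerfectMatching_iff_exists_perm_general A M
end

section
/- Let V be a finite type with n elements and let σ be a fixed-point-free permutation of V. Define the matrix M_σ : Matrix V V ℚ by M_σ u v = (if u = v then 1 else 0) − (if u = σ v then 1 else 0). Then the rank of M_σ over ℚ equals n minus the number of cycles of σ, i.e., Matrix.rank M_σ = n − σ.cycleType.card. -/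
/-!
Since `M_σ x = x - x ∘ σ⁻¹`, the kernel of `M_σ` consists of the `σ`-invariant functions,
i.e. the functions constant on the orbits of `σ`; it is therefore isomorphic to the space of
functions on the orbit set, and rank–nullity gives `rank M_σ + #orbits = n`. When `σ` has no
fixed point, every orbit is the support of exactly one cycle of `σ`, so
`#orbits = σ.cycleType.card`.
-/

open Equiv Function Matrix

namespace Equiv.Perm

variable {α : Type*} {σ : Perm α}

theorem SameCycle.apply_eq_of_comp_eq [Finite α] {β : Type*} {x : α → β} (hx : x ∘ σ = x)
    {u v : α} (h : σ.SameCycle u v) : x u = x v := by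
  obtain ⟨n, rfl⟩ := h.exists_nat_pow_eq
  rw [coe_pow, ← comp_apply (f := x), iterate_invariant hx]

theorem nat_card_quotient_sameCycle_eq_card_cycleType [Fintype α] [DecidableEq α]
    (hσ : ∀ v, σ v ≠ v) :
    Nat.card (Quotient (SameCycle.setoid σ)) = Multiset.card σ.cycleType := by
  let π : α → σ.cycleFactorsFinset := fun v =>
    ⟨σ.cycleOf v, cycleOf_mem_cycleFactorsFinset_iff.2 (mem_support.2 (hσ v))⟩
  have hπ : Surjective π := by
    rintro ⟨c, hc⟩
    obtain ⟨a, ha⟩ := (mem_cycleFactorsFinset_iff.1 hc).1.nonempty_support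
    exact ⟨a, Subtype.ext (cycle_is_cycleOf ha hc).symm⟩
  have hker : Setoid.ker π = SameCycle.setoid σ := by
    ext u v
    exact (Subtype.ext_iff.trans (sameCycle_iff_cycleOf_eq_of_mem_support
      (mem_support.2 (hσ u)) (mem_support.2 (hσ v))).symm)
  rw [← hker, Nat.card_congr (Setoid.quotientKerEquivOfSurjective π hπ), cycleType_def,
    Multiset.card_map, Nat.card_eq_fintype_card, Fintype.card_coe]
  rfl

variable [Fintype α] [DecidableEq α] (K : Type*) [Field K] (σ : Perm α)

def incidenceMatrix : Matrix α α K :=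
  fun u v => (if u = v then 1 else 0) - (if u = σ v then 1 else 0)

theorem incidenceMatrix_mulVec (x : α → K) :
    incidenceMatrix K σ *ᵥ x = x - x ∘ σ.symm := by
  ext u
  simp [incidenceMatrix, Matrix.mulVec, dotProduct, sub_mul, ite_mul, ← symm_apply_eq]

theorem mem_ker_incidenceMatrix_iff {x : α → K} :
    x ∈ LinearMap.ker (incidenceMatrix K σ).mulVecLin ↔ x ∘ σ = x := by
  rw [LinearMap.mem_ker, Matrix.mulVecLin_apply, incidenceMatrix_mulVec, sub_eq_zero,
    eq_comp_symm]

theorem range_funLeft_quotientMk_eq_ker_incidenceMatrix :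
    LinearMap.range (LinearMap.funLeft K K (Quotient.mk (SameCycle.setoid σ))) =
      LinearMap.ker (incidenceMatrix K σ).mulVecLin := by
  ext x
  rw [mem_ker_incidenceMatrix_iff]
  constructor
  · rintro ⟨g, rfl⟩
    funext v
    exact congrArg g (Quotient.sound (sameCycle_apply_left.2 (SameCycle.refl σ v)))
  · intro hx
    exact ⟨Quotient.lift x fun _ _ h => h.apply_eq_of_comp_eq hx, rfl⟩

theorem finrank_ker_incidenceMatrix :
    Module.finrank K (LinearMap.ker (incidenceMatrix K σ).mulVecLin) =
      Nat.card (Quotient (SameCycle.setoid σ)) := by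
  have := Fintype.ofFinite (Quotient (SameCycle.setoid σ))
  rw [← range_funLeft_quotientMk_eq_ker_incidenceMatrix, LinearMap.finrank_range_of_inj
    (LinearMap.funLeft_injective_of_surjective K K _ Quotient.mk_surjective),
    Module.finrank_pi, Nat.card_eq_fintype_card]

theorem rank_incidenceMatrix_add_nat_card_quotient_sameCycle :
    (incidenceMatrix K σ).rank + Nat.card (Quotient (SameCycle.setoid σ)) = Fintype.card α := by
  rw [Matrix.rank, ← finrank_ker_incidenceMatrix K, LinearMap.finrank_range_add_finrank_ker,
    Module.finrank_pi]

end Equiv.Perm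

/-- The rank of the incidence matrix of the functional digraph of a fixed-point-free
permutation `σ` of an `n`-element type equals `n` minus the number of cycles of `σ`. -/
theorem rank_perm_incidence_matrix {V : Type*} [Fintype V] [DecidableEq V] (n : ℕ)
    (hn : Fintype.card V = n) (σ : Equiv.Perm V) (hσ : ∀ v, σ v ≠ v) :
    Matrix.rank (fun u v : V =>
        ((if u = v then 1 else 0) - (if u = σ v then 1 else 0) : ℚ)) =
      n - Multiset.card σ.cycleType := by
  have h := Equiv.Perm.rank_incidenceMatrix_add_nat_card_quotient_sameCycle ℚ σ
  rw [Equiv.Perm.nat_card_quotient_sameCycle_eq_card_cycleType hσ] at h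
  change (Equiv.Perm.incidenceMatrix ℚ σ).rank = _
  omega
end
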